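/- arXiv:1806.08947 — 2 statements merged into one kernel-verified Lean document; each statement's English description precedes it below -/
import Mathlib

section
/- For 1 < p < ∞ and 1 ≤ q < ∞, define A_{p,q} as the minimum over nonzero u ∈ W^{1,p}((0,1)) with u(0)=0 or u(1)=0 of (∫₀¹|u'|^p dt)/(∫₀¹|u|^q dt)^{p/q}, and define π_{p,q} as the minimum of ‖u'‖_{L^p((0,1))}/‖u‖_{L^q((0,1))} over nonzero u ∈ W^{1,p}((0,1)) with u(0)=u(1)=0. Then A_{p,q} = (π_{p,q}/2)^p. -/
open MeasureTheory Metric Set Filter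

noncomputable section

/-- Euclidean space `ℝ^N`. -/
abbrev Spc (N : ℕ) := EuclideanSpace ℝ (Fin N)

/-- Perimeter of a set: the `(N-1)`-dimensional Hausdorff measure of its topological
boundary (for bounded convex sets this coincides with the De Giorgi perimeter). -/
noncomputable def perim (N : ℕ) (Ω : Set (Spc N)) : ℝ :=
  (μH[(N : ℝ) - 1] (frontier Ω)).toReal

/-- `N`-dimensional Lebesgue measure as a real number. -/
noncomputable def vol (N : ℕ) (Ω : Set (Spc N)) : ℝ := (volume Ω).toReal

/-- Inradius: the radius of the largest ball inscribed in `Ω`. -/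
noncomputable def inradius (N : ℕ) (Ω : Set (Spc N)) : ℝ :=
  sSup {r : ℝ | ∃ x, ball x r ⊆ Ω}

/-- The Poincaré–Sobolev constant `λ_{p,q}(Ω)`. -/
noncomputable def lambdaPQ (N : ℕ) (p q : ℝ) (Ω : Set (Spc N)) : ℝ :=
  sInf {r : ℝ | ∃ u : Spc N → ℝ, ContDiff ℝ (⊤ : ℕ∞) u ∧ HasCompactSupport u ∧
    tsupport u ⊆ Ω ∧ u ≠ 0 ∧
    r = (∫ x in Ω, ‖fderiv ℝ u x‖ ^ p) / (∫ x in Ω, |u x| ^ q) ^ (p / q)}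

/-- The one-dimensional Poincaré constant `π_{p,q}`. -/
noncomputable def piPQ (p q : ℝ) : ℝ :=
  sInf {r : ℝ | ∃ u : ℝ → ℝ, ContDiff ℝ 1 u ∧ u 0 = 0 ∧ u 1 = 0 ∧
    (∃ t ∈ Set.Ioo (0:ℝ) 1, u t ≠ 0) ∧
    r = (∫ t in (0:ℝ)..1, |deriv u t| ^ p) ^ (1 / p) /
        (∫ t in (0:ℝ)..1, |u t| ^ q) ^ (1 / q)}

/-- The one-dimensional constant `A_{p,q}`: the optimal constant for functions on `(0,1)`
vanishing at (at least) one endpoint. -/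
noncomputable def Apq (p q : ℝ) : ℝ :=
  sInf {r : ℝ | ∃ u : ℝ → ℝ, ContDiff ℝ 1 u ∧ (u 0 = 0 ∨ u 1 = 0) ∧
    (∃ t ∈ Set.Ioo (0:ℝ) 1, u t ≠ 0) ∧
    r = (∫ t in (0:ℝ)..1, |deriv u t| ^ p) / (∫ t in (0:ℝ)..1, |u t| ^ q) ^ (p / q)}

section Aux

open intervalIntegral

/-- continuous nonneg function positive somewhere inside has positive integral -/
lemma pos_integral {f : ℝ → ℝ} {a b t₁ : ℝ} (hf : Continuous f) (h0 : ∀ t, 0 ≤ f t)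
    (ht : t₁ ∈ Set.Ioo a b) (hpos : 0 < f t₁) : 0 < ∫ t in a..b, f t := by
  obtain ⟨ε, hε, hball⟩ := Metric.isOpen_iff.1 ((isOpen_lt continuous_const hf).inter isOpen_Ioo)
    t₁ ⟨hpos, ht⟩
  rw [Real.ball_eq_Ioo] at hball
  set α := max a (t₁ - ε/2) with hα
  set β := min b (t₁ + ε/2) with hβ
  have h1 : α < t₁ := max_lt ht.1 (by linarith)
  have h2 : t₁ < β := lt_min ht.2 (by linarith)
  have hsub : Set.Ioo α β ⊆ Set.Ioo (t₁ - ε) (t₁ + ε) := by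
    intro x hx
    constructor
    · have := le_max_right a (t₁ - ε/2); have := hx.1; simp only [hα] at this ⊢; linarith [hx.1.trans_le' (le_max_right a (t₁ - ε/2))]
    · have := hx.2.trans_le (min_le_right b (t₁ + ε/2)); linarith
  have haα : a ≤ α := le_max_left _ _
  have hβb : β ≤ b := min_le_left _ _
  have hi : ∀ x y : ℝ, IntervalIntegrable f volume x y := fun x y => hf.intervalIntegrable x y
  have hmid : 0 < ∫ t in α..β, f t := by
    apply intervalIntegral_pos_of_pos_on (hi α β) _ (h1.trans h2)
    intro x hx
    exact (hball (hsub hx)).1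
  have e1 : (∫ t in a..b, f t) = (∫ t in a..α, f t) + (∫ t in α..β, f t) + (∫ t in β..b, f t) := by
    rw [integral_add_adjacent_intervals (hi a α) (hi α β),
      integral_add_adjacent_intervals (hi a β) (hi β b)]
  have n1 : 0 ≤ ∫ t in a..α, f t := integral_nonneg haα (fun x _ => h0 x)
  have n2 : 0 ≤ ∫ t in β..b, f t := integral_nonneg hβb (fun x _ => h0 x)
  linarith

/-- converse: positive integral gives an interior point where f is nonzero -/
lemma exists_pos_of_pos_integral {f : ℝ → ℝ} {a b : ℝ} (hab : a ≤ b) (h0 : ∀ t, 0 ≤ f t)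
    (hpos : 0 < ∫ t in a..b, f t) : ∃ t ∈ Set.Ioo a b, 0 < f t := by
  by_contra hcon
  push_neg at hcon
  have heq : ∀ t ∈ Set.Ioo a b, f t = 0 := fun t ht => le_antisymm (hcon t ht) (h0 t)
  have : (∫ t in a..b, f t) = 0 := by
    rw [intervalIntegral.integral_of_le hab, MeasureTheory.integral_Ioc_eq_integral_Ioo]
    rw [MeasureTheory.setIntegral_congr_fun measurableSet_Ioo heq]
    simp
  linarith

lemma integral_comp_affine {g : ℝ → ℝ} (hg : Continuous g) (c d a b : ℝ) :
    ∫ x in a..b, c * g (c * x + d) = ∫ x in (c*a+d)..(c*b+d), g x := by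
  have h := integral_comp_smul_deriv (f := fun x => c * x + d) (f' := fun _ => c)
    (a := a) (b := b) (g := g)
    (fun x _ => by simpa using ((hasDerivAt_id x).const_mul c).add_const d) continuousOn_const hg
  simpa using h

lemma abs_rpow_le_two {p x : ℝ} (hp : 1 ≤ p) (hx : |x| ≤ 2) :
    |x| ^ p ≤ 2 ^ (p-1) * |x| := by
  rcases eq_or_ne x 0 with h | h
  · simp [h, Real.zero_rpow (by linarith : p ≠ 0)]
  · have hx0 : (0:ℝ) < |x| := abs_pos.2 h
    have e : |x| ^ p = |x| ^ (p-1) * |x| := by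
      rw [← Real.rpow_add_one (ne_of_gt hx0) (p-1)]; ring_nf
    rw [e]
    have : |x| ^ (p-1) ≤ 2 ^ (p-1) := Real.rpow_le_rpow (abs_nonneg x) hx (by linarith)
    exact mul_le_mul_of_nonneg_right this (abs_nonneg x)

lemma key_ineq {α m : ℝ} (hα : 0 < α) (hm : m ∈ Set.Ioo (0:ℝ) 1) :
    2 ^ (1+α) ≤ m ^ (-α) + (1-m) ^ (-α) := by
  obtain ⟨hm0, hm1⟩ := hm
  have hm1' : 0 < 1 - m := by linarith
  have ha : 0 < m ^ (-α) := Real.rpow_pos_of_pos hm0 _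
  have hb : 0 < (1-m) ^ (-α) := Real.rpow_pos_of_pos hm1' _
  have hprod : 2 ^ α * 2 ^ α ≤ m ^ (-α) * (1-m) ^ (-α) := by
    rw [← Real.mul_rpow hm0.le hm1'.le, ← Real.rpow_add (by norm_num : (0:ℝ) < 2)]
    have h4 : m * (1-m) ≤ 1/4 := by nlinarith [sq_nonneg (m - 1/2)]
    have : (m * (1-m)) ^ (-α) ≥ (1/4 : ℝ) ^ (-α) :=
      Real.rpow_le_rpow_of_nonpos (show (0:ℝ) < m*(1-m) by positivity) h4 (by linarith)
    calc (2:ℝ) ^ (α + α) = ((1:ℝ)/4) ^ (-α) := by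
          rw [show (1:ℝ)/4 = 2 ^ (-(2:ℝ)) by
            rw [show (-(2:ℝ)) = -2 by rfl]; rw [Real.rpow_neg (by norm_num), Real.rpow_two]; norm_num,
            ← Real.rpow_mul (by norm_num : (0:ℝ) ≤ 2)]
          ring_nf
      _ ≤ (m * (1-m)) ^ (-α) := this
  have hsq : 2 * Real.sqrt (m ^ (-α) * (1-m) ^ (-α)) ≤ m ^ (-α) + (1-m) ^ (-α) := by
    nlinarith [sq_nonneg (Real.sqrt (m ^ (-α)) - Real.sqrt ((1-m) ^ (-α))),
      Real.sq_sqrt ha.le, Real.sq_sqrt hb.le,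
      Real.sqrt_mul_self ha.le, Real.sqrt_nonneg (m ^ (-α)), Real.sqrt_nonneg ((1-m) ^ (-α)),
      Real.sqrt_mul ha.le ((1-m) ^ (-α))]
  have h2α : Real.sqrt (2 ^ α * 2 ^ α) ≤ Real.sqrt (m ^ (-α) * (1-m) ^ (-α)) :=
    Real.sqrt_le_sqrt hprod
  rw [Real.sqrt_mul_self (Real.rpow_nonneg (by norm_num) α)] at h2α
  calc (2:ℝ) ^ (1+α) = 2 * 2 ^ α := by
        rw [Real.rpow_add (by norm_num : (0:ℝ) < 2), Real.rpow_one]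
    _ ≤ 2 * Real.sqrt (m ^ (-α) * (1-m) ^ (-α)) := by linarith
    _ ≤ _ := hsq

variable {p q : ℝ}

/-- continuity of |f|^e for continuous f, 0 ≤ e -/
lemma cont_abs_rpow {f : ℝ → ℝ} (hf : Continuous f) {e : ℝ} (he : 0 ≤ e) :
    Continuous fun t => |f t| ^ e :=
  (continuous_abs.comp hf).rpow_const (fun _ => Or.inr he)

lemma apq_nonneg_mem {r : ℝ} (hr : r ∈ {r : ℝ | ∃ u : ℝ → ℝ, ContDiff ℝ 1 u ∧ (u 0 = 0 ∨ u 1 = 0) ∧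
    (∃ t ∈ Set.Ioo (0:ℝ) 1, u t ≠ 0) ∧
    r = (∫ t in (0:ℝ)..1, |deriv u t| ^ p) / (∫ t in (0:ℝ)..1, |u t| ^ q) ^ (p / q)}) : 0 ≤ r := by
  obtain ⟨u, -, -, -, rfl⟩ := hr
  apply div_nonneg
  · exact intervalIntegral.integral_nonneg (by norm_num)
      (fun x _ => Real.rpow_nonneg (abs_nonneg _) _)
  · exact Real.rpow_nonneg (intervalIntegral.integral_nonneg (by norm_num)
      (fun x _ => Real.rpow_nonneg (abs_nonneg _) _)) _

lemma apq_bddBelow : BddBelow {r : ℝ | ∃ u : ℝ → ℝ, ContDiff ℝ 1 u ∧ (u 0 = 0 ∨ u 1 = 0) ∧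
    (∃ t ∈ Set.Ioo (0:ℝ) 1, u t ≠ 0) ∧
    r = (∫ t in (0:ℝ)..1, |deriv u t| ^ p) / (∫ t in (0:ℝ)..1, |u t| ^ q) ^ (p / q)} :=
  ⟨0, fun _ hr => apq_nonneg_mem hr⟩

lemma apq_nonneg : 0 ≤ Apq p q := by
  rw [Apq]; exact Real.sInf_nonneg (fun _ hr => apq_nonneg_mem hr)

/-- The scaled restriction bound: if `w` is C¹ and `u = w(c·+d)` is A-admissible, then
`Apq p q` is at most the scaled Rayleigh quotient. -/
lemma apq_le_scaled (hp : 1 < p) (hq : 1 ≤ q) {w : ℝ → ℝ} (hw : ContDiff ℝ 1 w)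
    {c d : ℝ} (hc : 0 < c)
    (hend : w d = 0 ∨ w (c + d) = 0)
    (hnz : ∃ t ∈ Set.Ioo (0:ℝ) 1, w (c * t + d) ≠ 0) :
    Apq p q ≤ (c ^ (p-1) * ∫ t in d..(c+d), |deriv w t| ^ p) /
      ((∫ t in d..(c+d), |w t| ^ q) / c) ^ (p / q) := by
  have hwder : Continuous (deriv w) := hw.continuous_deriv le_rfl
  set u : ℝ → ℝ := fun t => w (c * t + d) with hu_def
  have haff : ContDiff ℝ 1 (fun t : ℝ => c * t + d) :=
    ((contDiff_const.mul contDiff_id).add contDiff_const)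
  have hu : ContDiff ℝ 1 u := hw.comp haff
  have hder : ∀ t, HasDerivAt u (c * deriv w (c * t + d)) t := by
    intro t
    have h1 : HasDerivAt (fun t : ℝ => c * t + d) c t := by
      simpa using ((hasDerivAt_id t).const_mul c).add_const d
    have h2 : HasDerivAt w (deriv w (c * t + d)) (c * t + d) :=
      (hw.differentiable one_ne_zero (c * t + d)).hasDerivAt
    have h3 := h2.comp t h1
    rw [mul_comm (deriv w (c * t + d)) c] at h3
    exact h3
  have hderiv_eq : ∀ t, deriv u t = c * deriv w (c * t + d) := fun t => (hder t).deriv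
  have hend' : u 0 = 0 ∨ u 1 = 0 := by
    rcases hend with h | h
    · left; simp [hu_def, h]
    · right; simpa [hu_def, mul_one] using h
  have hmem : (∫ t in (0:ℝ)..1, |deriv u t| ^ p) / (∫ t in (0:ℝ)..1, |u t| ^ q) ^ (p / q)
      ∈ {r : ℝ | ∃ u : ℝ → ℝ, ContDiff ℝ 1 u ∧ (u 0 = 0 ∨ u 1 = 0) ∧
      (∃ t ∈ Set.Ioo (0:ℝ) 1, u t ≠ 0) ∧
      r = (∫ t in (0:ℝ)..1, |deriv u t| ^ p) / (∫ t in (0:ℝ)..1, |u t| ^ q) ^ (p / q)} :=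
    ⟨u, hu, hend', hnz, rfl⟩
  have hle := csInf_le apq_bddBelow hmem
  rw [Apq]
  refine hle.trans (le_of_eq ?_)
  have eN : (∫ t in (0:ℝ)..1, |deriv u t| ^ p) = c ^ (p-1) * ∫ t in d..(c+d), |deriv w t| ^ p := by
    have e1 : ∀ t : ℝ, |deriv u t| ^ p = c ^ (p-1) * (c * |deriv w (c * t + d)| ^ p) := by
      intro t
      rw [hderiv_eq t, abs_mul, abs_of_pos hc, Real.mul_rpow hc.le (abs_nonneg _)]
      rw [show c ^ p = c ^ (p-1) * c by
        rw [← Real.rpow_add_one (ne_of_gt hc) (p-1)]; ring_nf]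
      ring
    rw [intervalIntegral.integral_congr (fun t _ => e1 t), intervalIntegral.integral_const_mul]
    congr 1
    have := integral_comp_affine (g := fun x => |deriv w x| ^ p)
      (cont_abs_rpow hwder (by linarith)) c d 0 1
    simpa [mul_zero, zero_add, mul_one] using this
  have eD : (∫ t in (0:ℝ)..1, |u t| ^ q) = (∫ t in d..(c+d), |w t| ^ q) / c := by
    have := integral_comp_affine (g := fun x => |w x| ^ q)
      (cont_abs_rpow hw.continuous (by linarith)) c d 0 1
    simp only [mul_zero, zero_add, mul_one] at this
    rw [eq_div_iff (ne_of_gt hc), ← this, intervalIntegral.integral_const_mul]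
    ring_nf
    exact mul_comm _ _
  rw [eN, eD]

lemma piPQ_set_nonempty :
    ({r : ℝ | ∃ u : ℝ → ℝ, ContDiff ℝ 1 u ∧ u 0 = 0 ∧ u 1 = 0 ∧
    (∃ t ∈ Set.Ioo (0:ℝ) 1, u t ≠ 0) ∧
    r = (∫ t in (0:ℝ)..1, |deriv u t| ^ p) ^ (1 / p) /
        (∫ t in (0:ℝ)..1, |u t| ^ q) ^ (1 / q)}).Nonempty := by
  refine ⟨_, ⟨fun t => t * (1 - t), (contDiff_id.mul (contDiff_const.sub contDiff_id)),
    by norm_num, by norm_num, ⟨1/2, ⟨by norm_num, by norm_num⟩, by norm_num⟩, rfl⟩⟩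

lemma dirI (hp : 1 < p) (hq : 1 ≤ q) : Apq p q ≤ (piPQ p q / 2) ^ p := by
  have hp0 : (0:ℝ) < p := by linarith
  have hq0 : (0:ℝ) < q := by linarith
  have hs : (0:ℝ) < p / q := div_pos hp0 hq0
  set s := p / q with hs_def
  set α := p - 1 + s with hα_def
  have hα : 0 < α := by simp only [hα_def]; linarith
  set A := Apq p q with hA_def
  have hA0 : 0 ≤ A := apq_nonneg
  have key : ∀ r ∈ {r : ℝ | ∃ u : ℝ → ℝ, ContDiff ℝ 1 u ∧ u 0 = 0 ∧ u 1 = 0 ∧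
      (∃ t ∈ Set.Ioo (0:ℝ) 1, u t ≠ 0) ∧
      r = (∫ t in (0:ℝ)..1, |deriv u t| ^ p) ^ (1 / p) /
          (∫ t in (0:ℝ)..1, |u t| ^ q) ^ (1 / q)}, 2 * A ^ (1/p) ≤ r := by
    rintro r ⟨w, hw, hw0, hw1, ⟨t₁, ht₁, ht₁ne⟩, rfl⟩
    have hhc : Continuous fun t => |w t| ^ q := cont_abs_rpow hw.continuous hq0.le
    have hgc : Continuous fun t => |deriv w t| ^ p :=
      cont_abs_rpow (hw.continuous_deriv le_rfl) hp0.le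
    have hhnn : ∀ t, 0 ≤ |w t| ^ q := fun t => Real.rpow_nonneg (abs_nonneg _) _
    have hgnn : ∀ t, 0 ≤ |deriv w t| ^ p := fun t => Real.rpow_nonneg (abs_nonneg _) _
    set D := ∫ t in (0:ℝ)..1, |w t| ^ q with hD_def
    set N := ∫ t in (0:ℝ)..1, |deriv w t| ^ p with hN_def
    have hN0 : 0 ≤ N := intervalIntegral.integral_nonneg (by norm_num) (fun x _ => hgnn x)
    have hD : 0 < D :=
      pos_integral hhc hhnn ht₁ (Real.rpow_pos_of_pos (abs_pos.2 ht₁ne) q)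
    -- median of the mass
    set H : ℝ → ℝ := fun x => ∫ t in (0:ℝ)..x, |w t| ^ q with hH_def
    have hH : ∀ x, HasDerivAt H (|w x| ^ q) x := fun x =>
      intervalIntegral.integral_hasDerivAt_right (hhc.intervalIntegrable (μ := volume) 0 x)
        ((hhc.aestronglyMeasurable (μ := volume)).stronglyMeasurableAtFilter) hhc.continuousAt
    have hHcont : Continuous H := continuous_iff_continuousAt.2 fun x => (hH x).continuousAt
    have hmem : D/2 ∈ Set.Ioo (H 0) (H 1) := by
      constructor
      · simp only [hH_def, intervalIntegral.integral_same]; linarith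
      · show D/2 < D; linarith
    obtain ⟨m, hm, hmD⟩ := intermediate_value_Ioo (by norm_num : (0:ℝ) ≤ 1)
      hHcont.continuousOn hmem
    have hm0 : 0 < m := hm.1
    have hm1 : m < 1 := hm.2
    have h1m : 0 < 1 - m := by linarith
    set N₁ := ∫ t in (0:ℝ)..m, |deriv w t| ^ p with hN₁_def
    set N₂ := ∫ t in m..(1:ℝ), |deriv w t| ^ p with hN₂_def
    have hNsplit : N = N₁ + N₂ :=
      (intervalIntegral.integral_add_adjacent_intervals
        (hgc.intervalIntegrable 0 m) (hgc.intervalIntegrable m 1)).symm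
    have hDsplit : (∫ t in m..(1:ℝ), |w t| ^ q) = D/2 := by
      have := intervalIntegral.integral_add_adjacent_intervals
        (hhc.intervalIntegrable (μ := volume) 0 m) (hhc.intervalIntegrable (μ := volume) m 1)
      have hHm : H m = D/2 := hmD
      simp only [hH_def] at hHm
      simp only [hD_def] at this ⊢
      linarith
    have hD2pos : (0:ℝ) < D/2 := by linarith
    -- side 1
    have hnz1 : ∃ t ∈ Set.Ioo (0:ℝ) 1, w (m * t + 0) ≠ 0 := by
      obtain ⟨τ, hτ, hτpos⟩ := exists_pos_of_pos_integral hm0.le hhnn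
        (by rw [show (∫ t in (0:ℝ)..m, |w t| ^ q) = D/2 from hmD]; exact hD2pos)
      refine ⟨τ/m, ⟨div_pos hτ.1 hm0, (div_lt_one hm0).2 hτ.2⟩, ?_⟩
      rw [add_zero, mul_div_cancel₀ _ (ne_of_gt hm0)]
      intro hzero
      rw [hzero] at hτpos
      simp [Real.zero_rpow (ne_of_gt hq0)] at hτpos
    have hS1 := apq_le_scaled hp hq hw hm0 (Or.inl hw0) hnz1
    rw [show m + (0:ℝ) = m by ring] at hS1
    have hHm' : (∫ t in (0:ℝ)..m, |w t| ^ q) = D/2 := hmD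
    rw [hHm'] at hS1
    -- side 2
    have hnz2 : ∃ t ∈ Set.Ioo (0:ℝ) 1, w ((1-m) * t + m) ≠ 0 := by
      obtain ⟨τ, hτ, hτpos⟩ := exists_pos_of_pos_integral hm1.le hhnn
        (by rw [hDsplit]; exact hD2pos)
      refine ⟨(τ - m)/(1-m), ⟨div_pos (by linarith [hτ.1]) h1m,
        (div_lt_one h1m).2 (by linarith [hτ.2])⟩, ?_⟩
      rw [mul_div_cancel₀ _ (ne_of_gt h1m)]
      rw [show τ - m + m = τ by ring]
      intro hzero
      rw [hzero] at hτpos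
      simp [Real.zero_rpow (ne_of_gt hq0)] at hτpos
    have hS2 := apq_le_scaled hp hq hw h1m (Or.inr (by rw [show 1 - m + m = (1:ℝ) by ring]; exact hw1)) hnz2
    rw [show 1 - m + m = (1:ℝ) by ring, hDsplit] at hS2
    -- extract lower bounds on N₁ N₂
    have extract : ∀ c : ℝ, 0 < c → ∀ Nc : ℝ,
        A ≤ (c ^ (p-1) * Nc) / ((D/2) / c) ^ s → A * ((D/2)^s * c^(-α)) ≤ Nc := by
      intro c hc Nc hle
      have hcp : (0:ℝ) < c ^ (p-1) := Real.rpow_pos_of_pos hc _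
      have hrp : (0:ℝ) < ((D/2) / c) ^ s := Real.rpow_pos_of_pos (div_pos hD2pos hc) _
      have h1 : A * ((D/2) / c) ^ s ≤ c ^ (p-1) * Nc := (le_div_iff₀ hrp).1 hle
      have e : ((D/2) / c) ^ s / c ^ (p-1) = (D/2)^s * c^(-α) := by
        rw [Real.div_rpow hD2pos.le hc.le, div_div, ← Real.rpow_add hc,
          Real.rpow_neg hc.le, div_eq_mul_inv]
        congr 2
        simp only [hα_def]; ring
      have h2 : A * (((D/2) / c) ^ s / c ^ (p-1)) ≤ Nc := by
        rw [mul_div_assoc'] at *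
        rw [div_le_iff₀ hcp]
        calc A * ((D/2)/c)^s ≤ c ^ (p-1) * Nc := h1
          _ = Nc * c ^ (p-1) := by ring
      rw [e] at h2
      exact h2
    have hN₁ := extract m hm0 N₁ hS1
    have hN₂ := extract (1-m) h1m N₂ hS2
    -- combine
    have hkey := key_ineq hα hm
    have hfac : 0 ≤ A * (D/2)^s := mul_nonneg hA0 (Real.rpow_nonneg hD2pos.le _)
    have hNlow : A * (D/2)^s * (2 ^ (1+α)) ≤ N := by
      calc A * (D/2)^s * (2 ^ (1+α)) ≤ A * (D/2)^s * (m^(-α) + (1-m)^(-α)) :=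
            mul_le_mul_of_nonneg_left hkey hfac
        _ = A * ((D/2)^s * m^(-α)) + A * ((D/2)^s * (1-m)^(-α)) := by ring
        _ ≤ N₁ + N₂ := add_le_add hN₁ hN₂
        _ = N := hNsplit.symm
    have e2 : A * (D/2)^s * (2 ^ (1+α)) = 2^p * A * D^s := by
      rw [Real.div_rpow hD.le (by norm_num : (0:ℝ) ≤ 2),
        show (1:ℝ)+α = p + s by simp only [hα_def]; ring,
        Real.rpow_add (by norm_num : (0:ℝ) < 2)]
      have h2s : (2:ℝ)^s ≠ 0 := ne_of_gt (Real.rpow_pos_of_pos (by norm_num) _)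
      field_simp
    have hNfinal : 2^p * A * D^s ≤ N := by rw [← e2]; exact hNlow
    -- conclude r ≥ 2 A^{1/p}
    have hDq : (0:ℝ) < D ^ (1/q) := Real.rpow_pos_of_pos hD _
    rw [le_div_iff₀ hDq]
    have hrpowle : (2^p * A * D^s) ^ (1/p) ≤ N ^ (1/p) :=
      Real.rpow_le_rpow (by positivity) hNfinal (by positivity)
    have e3 : (2^p * A * D^s) ^ (1/p) = 2 * A^(1/p) * D^(1/q) := by
      rw [Real.mul_rpow (by positivity) (Real.rpow_nonneg hD.le _),
        Real.mul_rpow (by positivity) hA0]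
      congr 1
      · congr 1
        rw [← Real.rpow_mul (by norm_num : (0:ℝ) ≤ 2), mul_one_div_cancel (ne_of_gt hp0),
          Real.rpow_one]
      · rw [← Real.rpow_mul hD.le]
        congr 1
        rw [hs_def]
        field_simp
    show 2 * A^(1/p) * D^(1/q) ≤ N ^ (1/p)
    rw [← e3]
    exact hrpowle
  have hP : 2 * A ^ (1/p) ≤ piPQ p q := by
    rw [piPQ]
    exact le_csInf piPQ_set_nonempty key
  have h2 : A^(1/p) ≤ piPQ p q / 2 := by linarith
  calc A = (A^(1/p))^p := by
        rw [← Real.rpow_mul hA0, one_div_mul_cancel (ne_of_gt hp0), Real.rpow_one]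
    _ ≤ (piPQ p q / 2)^p := Real.rpow_le_rpow (Real.rpow_nonneg hA0 _) h2 hp0.le


noncomputable def rho (δ t : ℝ) : ℝ := 2 * max (-1) (min 1 ((1/2 - t)/δ))

noncomputable def phi (δ x : ℝ) : ℝ := ∫ t in (0:ℝ)..x, rho δ t

variable {δ : ℝ}

lemma rho_cont (hδ : 0 < δ) : Continuous (rho δ) := by
  unfold rho
  exact continuous_const.mul (continuous_const.max (continuous_const.min
    ((continuous_const.sub continuous_id).div_const δ)))

lemma rho_abs_le (t : ℝ) : |rho δ t| ≤ 2 := by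
  unfold rho
  rw [abs_mul]
  have h1 : |max (-1) (min 1 ((1/2 - t)/δ))| ≤ 1 := by
    rw [abs_le]
    constructor
    · exact le_max_left _ _
    · exact max_le (by norm_num) (min_le_left _ _)
  calc |(2:ℝ)| * |max (-1) (min 1 ((1/2 - t)/δ))| ≤ |(2:ℝ)| * 1 :=
        mul_le_mul_of_nonneg_left h1 (abs_nonneg _)
    _ = 2 := by norm_num

lemma rho_eq_two (hδ : 0 < δ) {t : ℝ} (ht : t ≤ 1/2 - δ) : rho δ t = 2 := by
  unfold rho
  have h1 : (1:ℝ) ≤ (1/2 - t)/δ := (le_div_iff₀ hδ).2 (by linarith)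
  rw [min_eq_left h1, max_eq_right (by norm_num : (-1:ℝ) ≤ 1), mul_one]

lemma rho_nonneg (hδ : 0 < δ) {t : ℝ} (ht : t ≤ 1/2) : 0 ≤ rho δ t := by
  unfold rho
  have h1 : (0:ℝ) ≤ (1/2 - t)/δ := div_nonneg (by linarith) hδ.le
  have : (0:ℝ) ≤ min 1 ((1/2 - t)/δ) := le_min (by norm_num) h1
  have h2 : (0:ℝ) ≤ max (-1) (min 1 ((1/2 - t)/δ)) := le_trans this (le_max_right _ _)
  linarith

lemma clamp_neg (x : ℝ) : max (-1) (min 1 (-x)) = - max (-1) (min 1 x) := by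
  rcases le_total x (-1) with h | h
  · rw [min_eq_right (h.trans (by norm_num)), max_eq_left h,
      min_eq_left (by linarith), max_eq_right (by linarith)]
    norm_num
  · rcases le_total 1 x with h2 | h2
    · rw [min_eq_left h2, max_eq_right (by norm_num : (-1:ℝ) ≤ 1),
        min_eq_right (by linarith : -x ≤ 1), max_eq_left (by linarith : -x ≤ -1)]
    · rw [min_eq_right h2, max_eq_right h, min_eq_right (by linarith),
        max_eq_right (by linarith)]

lemma rho_reflect (t : ℝ) : rho δ (1 - t) = - rho δ t := by
  unfold rho
  have e : (1/2 - (1 - t))/δ = -((1/2 - t)/δ) := by ring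
  rw [e, clamp_neg]
  ring

lemma rho_nonpos (hδ : 0 < δ) {t : ℝ} (ht : 1/2 ≤ t) : rho δ t ≤ 0 := by
  have := rho_reflect (δ := δ) (1 - t)
  rw [show 1 - (1-t) = t by ring] at this
  rw [this]
  simp only [neg_nonpos]
  exact rho_nonneg hδ (by linarith)

lemma phi_hasDeriv (hδ : 0 < δ) : ∀ x, HasDerivAt (phi δ) (rho δ x) x := fun x =>
  intervalIntegral.integral_hasDerivAt_right
    ((rho_cont hδ).intervalIntegrable (μ := volume) 0 x)
    (((rho_cont hδ).aestronglyMeasurable (μ := volume)).stronglyMeasurableAtFilter)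
    (rho_cont hδ).continuousAt

lemma phi_contDiff (hδ : 0 < δ) : ContDiff ℝ 1 (phi δ) := by
  rw [contDiff_one_iff_deriv]
  constructor
  · exact fun x => (phi_hasDeriv hδ x).differentiableAt
  · have : deriv (phi δ) = rho δ := funext fun x => (phi_hasDeriv hδ x).deriv
    rw [this]; exact rho_cont hδ

lemma phi_zero : phi δ 0 = 0 := intervalIntegral.integral_same

lemma phi_one (hδ : 0 < δ) : phi δ 1 = 0 := by
  have h1 : phi δ 1 = ∫ t in (0:ℝ)..1, rho δ (1 - t) := by
    unfold phi
    rw [intervalIntegral.integral_comp_sub_left (rho δ) 1]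
    norm_num
  have h2 : (∫ t in (0:ℝ)..1, rho δ (1 - t)) = - phi δ 1 := by
    unfold phi
    rw [← intervalIntegral.integral_neg]
    exact intervalIntegral.integral_congr (fun t _ => rho_reflect t)
  have := h1.trans h2
  linarith

lemma phi_reflect (hδ : 0 < δ) (x : ℝ) : phi δ (1 - x) = phi δ x := by
  have hsplit : phi δ 1 = phi δ (1-x) + ∫ t in (1-x)..1, rho δ t := by
    unfold phi
    rw [intervalIntegral.integral_add_adjacent_intervals
      ((rho_cont hδ).intervalIntegrable (μ := volume) 0 (1-x))
      ((rho_cont hδ).intervalIntegrable (μ := volume) (1-x) 1)]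
  have hCoV : (∫ t in (1-x)..1, rho δ t) = - phi δ x := by
    have h1 : (∫ t in x..(0:ℝ), rho δ (1 - t)) = - ∫ t in (1-x)..1, rho δ t := by
      rw [intervalIntegral.integral_comp_sub_left (rho δ) 1,
        show (1:ℝ)-0 = 1 by norm_num, intervalIntegral.integral_symm (1-x) 1]
    have h2 : (∫ t in x..(0:ℝ), rho δ (1 - t)) = phi δ x := by
      calc (∫ t in x..(0:ℝ), rho δ (1 - t)) = ∫ t in x..(0:ℝ), -rho δ t :=
            intervalIntegral.integral_congr (fun t _ => rho_reflect t)
        _ = -∫ t in x..(0:ℝ), rho δ t := intervalIntegral.integral_neg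
        _ = ∫ t in (0:ℝ)..x, rho δ t := by
            rw [intervalIntegral.integral_symm 0 x, neg_neg]
        _ = phi δ x := rfl
    rw [h2] at h1
    linarith
  rw [phi_one hδ, hCoV] at hsplit
  linarith

lemma phi_eq_two_mul (hδ : 0 < δ) {x : ℝ} (hx0 : 0 ≤ x) (hx : x ≤ 1/2 - δ) :
    phi δ x = 2 * x := by
  unfold phi
  have : ∀ t ∈ Set.uIcc (0:ℝ) x, rho δ t = 2 := by
    intro t ht
    rw [Set.uIcc_of_le hx0] at ht
    exact rho_eq_two hδ (le_trans ht.2 hx)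
  rw [intervalIntegral.integral_congr this]
  simp [mul_comm]

lemma phi_half_le (hδ : 0 < δ) : phi δ (1/2) ≤ 1 := by
  unfold phi
  calc (∫ t in (0:ℝ)..(1/2), rho δ t) ≤ ∫ t in (0:ℝ)..(1/2), (2:ℝ) := by
        apply intervalIntegral.integral_mono_on (by norm_num)
          ((rho_cont hδ).intervalIntegrable _ _)
          (intervalIntegrable_const)
        intro x _
        exact (le_abs_self _).trans (rho_abs_le x)
    _ = 1 := by simp

lemma phi_half_ge (hδ : 0 < δ) (hδ4 : δ ≤ 1/4) : 1 - 2*δ ≤ phi δ (1/2) := by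
  have hsplit : phi δ (1/2) = phi δ (1/2 - δ) + ∫ t in (1/2-δ)..(1/2), rho δ t := by
    unfold phi
    rw [intervalIntegral.integral_add_adjacent_intervals
      ((rho_cont hδ).intervalIntegrable (μ := volume) 0 (1/2-δ))
      ((rho_cont hδ).intervalIntegrable (μ := volume) (1/2-δ) (1/2))]
  have h1 : phi δ (1/2 - δ) = 1 - 2*δ := by
    rw [phi_eq_two_mul hδ (by linarith) (le_refl _)]; ring
  have h2 : 0 ≤ ∫ t in (1/2-δ)..(1/2), rho δ t :=
    intervalIntegral.integral_nonneg (by linarith)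
      (fun t ht => rho_nonneg hδ ht.2)
  rw [hsplit, h1]
  linarith

lemma phi_half_nonneg (hδ : 0 < δ) (hδ4 : δ ≤ 1/4) : 0 ≤ phi δ (1/2) := by
  have := phi_half_ge hδ hδ4
  linarith


lemma primitive_mono {f : ℝ → ℝ} (hf : Continuous f) (h0 : ∀ t, 0 ≤ f t) {a b : ℝ}
    (hab : a ≤ b) : (∫ t in (0:ℝ)..a, f t) ≤ ∫ t in (0:ℝ)..b, f t := by
  have := intervalIntegral.integral_add_adjacent_intervals
    (hf.intervalIntegrable (μ := volume) 0 a) (hf.intervalIntegrable (μ := volume) a b)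
  have h2 : 0 ≤ ∫ t in a..b, f t := intervalIntegral.integral_nonneg hab (fun x _ => h0 x)
  linarith

lemma pi_nonneg_mem {r : ℝ} (hr : r ∈ {r : ℝ | ∃ u : ℝ → ℝ, ContDiff ℝ 1 u ∧ u 0 = 0 ∧ u 1 = 0 ∧
    (∃ t ∈ Set.Ioo (0:ℝ) 1, u t ≠ 0) ∧
    r = (∫ t in (0:ℝ)..1, |deriv u t| ^ p) ^ (1 / p) /
        (∫ t in (0:ℝ)..1, |u t| ^ q) ^ (1 / q)}) : 0 ≤ r := by
  obtain ⟨u, -, -, -, -, rfl⟩ := hr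
  apply div_nonneg <;>
  exact Real.rpow_nonneg (intervalIntegral.integral_nonneg (by norm_num)
      (fun x _ => Real.rpow_nonneg (abs_nonneg _) _)) _

lemma pi_bddBelow : BddBelow {r : ℝ | ∃ u : ℝ → ℝ, ContDiff ℝ 1 u ∧ u 0 = 0 ∧ u 1 = 0 ∧
    (∃ t ∈ Set.Ioo (0:ℝ) 1, u t ≠ 0) ∧
    r = (∫ t in (0:ℝ)..1, |deriv u t| ^ p) ^ (1 / p) /
        (∫ t in (0:ℝ)..1, |u t| ^ q) ^ (1 / q)} :=
  ⟨0, fun _ hr => pi_nonneg_mem hr⟩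

lemma piPQ_nonneg : 0 ≤ piPQ p q := by
  rw [piPQ]; exact Real.sInf_nonneg (fun _ hr => pi_nonneg_mem hr)

lemma tent_integral {δ : ℝ} (hδ : 0 < δ) {F : ℝ → ℝ} (hF : Continuous F) :
    (∫ t in (0:ℝ)..1, F (phi δ t) * |rho δ t|) = 2 * ∫ x in (0:ℝ)..(phi δ (1/2)), F x := by
  have hFc : Continuous fun t => F (phi δ t) * |rho δ t| :=
    (hF.comp (phi_contDiff hδ).continuous).mul (rho_cont hδ).abs
  have hsplit := intervalIntegral.integral_add_adjacent_intervals
    (hFc.intervalIntegrable (μ := volume) 0 (1/2)) (hFc.intervalIntegrable (μ := volume) (1/2) 1)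
  have hCoV1 : (∫ t in (0:ℝ)..(1/2), rho δ t • F (phi δ t)) =
      ∫ x in (0:ℝ)..(phi δ (1/2)), F x := by
    have h := intervalIntegral.integral_comp_smul_deriv (f := phi δ) (f' := rho δ)
      (a := 0) (b := 1/2) (g := F) (fun x _ => phi_hasDeriv hδ x) (rho_cont hδ).continuousOn hF
    rw [phi_zero] at h
    exact h
  have I1 : (∫ t in (0:ℝ)..(1/2), F (phi δ t) * |rho δ t|) =
      ∫ x in (0:ℝ)..(phi δ (1/2)), F x := by
    rw [← hCoV1]
    apply intervalIntegral.integral_congr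
    intro t ht
    rw [Set.uIcc_of_le (by norm_num : (0:ℝ) ≤ 1/2)] at ht
    show F (phi δ t) * |rho δ t| = rho δ t • F (phi δ t)
    rw [abs_of_nonneg (rho_nonneg hδ ht.2), smul_eq_mul]; ring
  have hCoV2 : (∫ t in (1/2:ℝ)..1, rho δ t • F (phi δ t)) =
      - ∫ x in (0:ℝ)..(phi δ (1/2)), F x := by
    have h := intervalIntegral.integral_comp_smul_deriv (f := phi δ) (f' := rho δ)
      (a := 1/2) (b := 1) (g := F) (fun x _ => phi_hasDeriv hδ x) (rho_cont hδ).continuousOn hF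
    rw [phi_one hδ] at h
    calc (∫ t in (1/2:ℝ)..1, rho δ t • F (phi δ t))
        = ∫ x in (phi δ (1/2))..0, F x := h
      _ = - ∫ x in (0:ℝ)..(phi δ (1/2)), F x := intervalIntegral.integral_symm 0 (phi δ (1/2))
  have I2 : (∫ t in (1/2:ℝ)..1, F (phi δ t) * |rho δ t|) =
      ∫ x in (0:ℝ)..(phi δ (1/2)), F x := by
    have e : (∫ t in (1/2:ℝ)..1, F (phi δ t) * |rho δ t|) =
        ∫ t in (1/2:ℝ)..1, -(rho δ t • F (phi δ t)) := by
      apply intervalIntegral.integral_congr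
      intro t ht
      rw [Set.uIcc_of_le (by norm_num : (1/2:ℝ) ≤ 1)] at ht
      show F (phi δ t) * |rho δ t| = -(rho δ t • F (phi δ t))
      rw [abs_of_nonpos (rho_nonpos hδ ht.1), smul_eq_mul]; ring
    rw [e, intervalIntegral.integral_neg, hCoV2, neg_neg]
  rw [← hsplit, I1, I2]; ring

lemma tent_bound (hp : 1 < p) (hq : 1 ≤ q) {u : ℝ → ℝ} (hu : ContDiff ℝ 1 u) (hu0 : u 0 = 0)
    {t₁ : ℝ} (ht₁ : t₁ ∈ Set.Ioo (0:ℝ) 1) (hne : u t₁ ≠ 0) {δ : ℝ} (hδ : 0 < δ)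
    (hδ4 : δ ≤ 1/4) (hδt : δ < (1 - t₁)/2) :
    piPQ p q ≤ 2 * (∫ t in (0:ℝ)..1, |deriv u t| ^ p) ^ (1/p) /
      (∫ t in (0:ℝ)..(1-2*δ), |u t| ^ q) ^ (1/q) := by
  have hp0 : (0:ℝ) < p := by linarith
  have hq0 : (0:ℝ) < q := by linarith
  have hGc : Continuous fun x => |deriv u x| ^ p :=
    cont_abs_rpow (hu.continuous_deriv le_rfl) hp0.le
  have hhc : Continuous fun x => |u x| ^ q := cont_abs_rpow hu.continuous hq0.le
  have hGnn : ∀ t, 0 ≤ |deriv u t| ^ p := fun t => Real.rpow_nonneg (abs_nonneg _) _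
  have hhnn : ∀ t, 0 ≤ |u t| ^ q := fun t => Real.rpow_nonneg (abs_nonneg _) _
  set c := phi δ (1/2) with hc_def
  have hc0 : 0 ≤ c := phi_half_nonneg hδ hδ4
  have hc1 : c ≤ 1 := phi_half_le hδ
  have hcl : 1 - 2*δ ≤ c := phi_half_ge hδ hδ4
  set w : ℝ → ℝ := fun t => u (phi δ t) with hw_def
  have hw : ContDiff ℝ 1 w := hu.comp (phi_contDiff hδ)
  have hwder : ∀ t, HasDerivAt w (deriv u (phi δ t) * rho δ t) t := fun t =>
    ((hu.differentiable one_ne_zero (phi δ t)).hasDerivAt).comp t (phi_hasDeriv hδ t)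
  have hwderiv : ∀ t, deriv w t = deriv u (phi δ t) * rho δ t := fun t => (hwder t).deriv
  have hw0 : w 0 = 0 := by rw [hw_def]; simp only [phi_zero]; exact hu0
  have hw1 : w 1 = 0 := by rw [hw_def]; simp only [phi_one hδ]; exact hu0
  have hwnz : ∃ t ∈ Set.Ioo (0:ℝ) 1, w t ≠ 0 := by
    refine ⟨t₁/2, ⟨by linarith [ht₁.1], by linarith [ht₁.2]⟩, ?_⟩
    rw [hw_def]
    simp only
    rw [phi_eq_two_mul hδ (by linarith [ht₁.1]) (by linarith [ht₁.2])]
    rw [show 2 * (t₁/2) = t₁ by ring]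
    exact hne
  -- membership
  have hP : piPQ p q ≤ (∫ t in (0:ℝ)..1, |deriv w t| ^ p) ^ (1/p) /
      (∫ t in (0:ℝ)..1, |w t| ^ q) ^ (1/q) := by
    rw [piPQ]
    exact csInf_le pi_bddBelow ⟨w, hw, hw0, hw1, hwnz, rfl⟩
  set Nu := ∫ t in (0:ℝ)..1, |deriv u t| ^ p with hNu_def
  set Dd := ∫ t in (0:ℝ)..(1-2*δ), |u t| ^ q with hDd_def
  have hNu0 : 0 ≤ Nu := intervalIntegral.integral_nonneg (by norm_num) (fun x _ => hGnn x)
  have hDd0 : 0 < Dd := by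
    apply pos_integral hhc hhnn (t₁ := t₁) ⟨ht₁.1, by linarith [ht₁.2]⟩
    exact Real.rpow_pos_of_pos (abs_pos.2 hne) q
  -- numerator bound
  have hNw : (∫ t in (0:ℝ)..1, |deriv w t| ^ p) ≤ 2^p * Nu := by
    have hwc : Continuous fun t => |deriv w t| ^ p := by
      have : Continuous (deriv w) := by
        rw [funext hwderiv]
        exact ((hu.continuous_deriv le_rfl).comp (phi_contDiff hδ).continuous).mul (rho_cont hδ)
      exact cont_abs_rpow this hp0.le
    have hmulc : Continuous fun t => (fun x => |deriv u x| ^ p) (phi δ t) * |rho δ t| :=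
      (hGc.comp (phi_contDiff hδ).continuous).mul (rho_cont hδ).abs
    have step1 : (∫ t in (0:ℝ)..1, |deriv w t| ^ p) ≤
        ∫ t in (0:ℝ)..1, 2^(p-1) * ((fun x => |deriv u x| ^ p) (phi δ t) * |rho δ t|) := by
      apply intervalIntegral.integral_mono_on (by norm_num)
        (hwc.intervalIntegrable _ _) ((continuous_const.mul hmulc).intervalIntegrable _ _)
      intro t _
      rw [hwderiv t, abs_mul, Real.mul_rpow (abs_nonneg _) (abs_nonneg _)]
      calc |deriv u (phi δ t)| ^ p * |rho δ t| ^ p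
          ≤ |deriv u (phi δ t)| ^ p * (2^(p-1) * |rho δ t|) :=
            mul_le_mul_of_nonneg_left (abs_rpow_le_two hp.le (rho_abs_le t)) (hGnn _)
        _ = 2^(p-1) * (|deriv u (phi δ t)| ^ p * |rho δ t|) := by ring
    rw [intervalIntegral.integral_const_mul] at step1
    rw [tent_integral hδ hGc] at step1
    have hmono : (∫ x in (0:ℝ)..c, |deriv u x| ^ p) ≤ Nu := primitive_mono hGc hGnn hc1
    have e2 : (2:ℝ)^p = 2^(p-1) * 2 := by
      rw [← Real.rpow_add_one (by norm_num : (2:ℝ) ≠ 0) (p-1)]; norm_num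
    calc (∫ t in (0:ℝ)..1, |deriv w t| ^ p)
        ≤ 2^(p-1) * (2 * ∫ x in (0:ℝ)..c, |deriv u x| ^ p) := step1
      _ ≤ 2^(p-1) * (2 * Nu) := by
          apply mul_le_mul_of_nonneg_left _ (Real.rpow_nonneg (by norm_num) _)
          linarith
      _ = 2^p * Nu := by rw [e2]; ring
  -- denominator bound
  have hDw : Dd ≤ ∫ t in (0:ℝ)..1, |w t| ^ q := by
    have hmulc : Continuous fun t => (fun x => |u x| ^ q) (phi δ t) * |rho δ t| :=
      (hhc.comp (phi_contDiff hδ).continuous).mul (rho_cont hδ).abs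
    have step1 : (∫ t in (0:ℝ)..1, (fun x => |u x| ^ q) (phi δ t) * |rho δ t|) ≤
        2 * ∫ t in (0:ℝ)..1, |w t| ^ q := by
      have : (∫ t in (0:ℝ)..1, (fun x => |u x| ^ q) (phi δ t) * |rho δ t|) ≤
          ∫ t in (0:ℝ)..1, 2 * |w t| ^ q := by
        apply intervalIntegral.integral_mono_on (by norm_num)
          (hmulc.intervalIntegrable _ _)
          ((continuous_const.mul (cont_abs_rpow hw.continuous hq0.le)).intervalIntegrable _ _)
        intro t _
        simp only
        calc |u (phi δ t)| ^ q * |rho δ t| ≤ |u (phi δ t)| ^ q * 2 :=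
              mul_le_mul_of_nonneg_left (rho_abs_le t) (hhnn _)
          _ = 2 * |w t| ^ q := by rw [hw_def]; ring
      rw [intervalIntegral.integral_const_mul] at this
      exact this
    rw [tent_integral hδ hhc] at step1
    have hmono : Dd ≤ ∫ x in (0:ℝ)..c, |u x| ^ q := primitive_mono hhc hhnn hcl
    linarith
  -- combine
  refine hP.trans ?_
  have hDdq : (0:ℝ) < Dd ^ (1/q) := Real.rpow_pos_of_pos hDd0 _
  have hnum : (∫ t in (0:ℝ)..1, |deriv w t| ^ p) ^ (1/p) ≤ 2 * Nu ^ (1/p) := by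
    have h1 : (∫ t in (0:ℝ)..1, |deriv w t| ^ p) ^ (1/p) ≤ (2^p * Nu) ^ (1/p) :=
      Real.rpow_le_rpow (intervalIntegral.integral_nonneg (by norm_num)
        (fun x _ => Real.rpow_nonneg (abs_nonneg _) _)) hNw (by positivity)
    have h2 : ((2:ℝ)^p * Nu) ^ (1/p) = 2 * Nu ^ (1/p) := by
      rw [Real.mul_rpow (by positivity) hNu0, ← Real.rpow_mul (by norm_num : (0:ℝ) ≤ 2),
        mul_one_div_cancel (ne_of_gt hp0), Real.rpow_one]
    rw [h2] at h1
    exact h1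
  have hden : Dd ^ (1/q) ≤ (∫ t in (0:ℝ)..1, |w t| ^ q) ^ (1/q) :=
    Real.rpow_le_rpow hDd0.le hDw (by positivity)
  exact div_le_div₀ (by positivity) hnum hDdq hden

lemma reflect_deriv {u : ℝ → ℝ} (hu : ContDiff ℝ 1 u) (t : ℝ) :
    deriv (fun s => u (1 - s)) t = - deriv u (1 - t) := by
  have h1 : HasDerivAt (fun s : ℝ => 1 - s) (-1) t := by
    exact (hasDerivAt_id t).const_sub 1
  have h2 : HasDerivAt u (deriv u (1 - t)) (1 - t) :=
    (hu.differentiable one_ne_zero (1 - t)).hasDerivAt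
  have := h2.comp t h1
  have e := this.deriv
  simp only [mul_neg, mul_one] at e
  exact e

lemma reflect_int {f : ℝ → ℝ} : (∫ t in (0:ℝ)..1, f (1 - t)) = ∫ t in (0:ℝ)..1, f t := by
  rw [intervalIntegral.integral_comp_sub_left f 1]
  norm_num

/-- Direction II for a single admissible u vanishing at 0. -/
lemma dirII_u (hp : 1 < p) (hq : 1 ≤ q) {u : ℝ → ℝ} (hu : ContDiff ℝ 1 u) (hu0 : u 0 = 0)
    {t₁ : ℝ} (ht₁ : t₁ ∈ Set.Ioo (0:ℝ) 1) (hne : u t₁ ≠ 0) :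
    (piPQ p q / 2) ^ p ≤ (∫ t in (0:ℝ)..1, |deriv u t| ^ p) /
      (∫ t in (0:ℝ)..1, |u t| ^ q) ^ (p / q) := by
  have hp0 : (0:ℝ) < p := by linarith
  have hq0 : (0:ℝ) < q := by linarith
  have hhc : Continuous fun x => |u x| ^ q := cont_abs_rpow hu.continuous hq0.le
  have hhnn : ∀ t, 0 ≤ |u t| ^ q := fun t => Real.rpow_nonneg (abs_nonneg _) _
  set Nu := ∫ t in (0:ℝ)..1, |deriv u t| ^ p with hNu_def
  set Du := ∫ t in (0:ℝ)..1, |u t| ^ q with hDu_def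
  have hNu0 : 0 ≤ Nu := intervalIntegral.integral_nonneg (by norm_num)
    (fun x _ => Real.rpow_nonneg (abs_nonneg _) _)
  have hDu : 0 < Du := pos_integral hhc hhnn ht₁ (Real.rpow_pos_of_pos (abs_pos.2 hne) q)
  set δ₀ := min (1/4 : ℝ) ((1 - t₁)/2) with hδ₀_def
  have hδ₀ : 0 < δ₀ := lt_min (by norm_num) (by linarith [ht₁.2])
  set K : ℝ → ℝ := fun δ => ∫ t in (0:ℝ)..(1-2*δ), |u t| ^ q with hK_def
  have hstep : ∀ δ ∈ Set.Ioo 0 δ₀, (piPQ p q / 2) ^ p ≤ Nu / (K δ) ^ (p/q) := by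
    intro δ hδ
    have hδpos : 0 < δ := hδ.1
    have hδ4 : δ ≤ 1/4 := le_of_lt (lt_of_lt_of_le hδ.2 (min_le_left _ _))
    have hδt : δ < (1 - t₁)/2 := lt_of_lt_of_le hδ.2 (min_le_right _ _)
    have hKpos : 0 < K δ := by
      apply pos_integral hhc hhnn (t₁ := t₁) ⟨ht₁.1, by linarith [ht₁.2]⟩
      exact Real.rpow_pos_of_pos (abs_pos.2 hne) q
    have hb := tent_bound hp hq hu hu0 ht₁ hne hδpos hδ4 hδt
    have hKq : (0:ℝ) < (K δ) ^ (1/q) := Real.rpow_pos_of_pos hKpos _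
    have h2 : piPQ p q / 2 ≤ Nu ^ (1/p) / (K δ) ^ (1/q) := by
      rw [div_le_div_iff₀ (by norm_num) hKq] at *
      calc piPQ p q * (K δ) ^ (1/q) ≤ (2 * Nu ^ (1/p) / (K δ) ^ (1/q)) * (K δ) ^ (1/q) :=
            mul_le_mul_of_nonneg_right hb hKq.le
        _ = Nu ^ (1/p) * 2 := by field_simp
    have h3 : (piPQ p q / 2) ^ p ≤ (Nu ^ (1/p) / (K δ) ^ (1/q)) ^ p :=
      Real.rpow_le_rpow (div_nonneg piPQ_nonneg (by norm_num)) h2 hp0.le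
    have h4 : (Nu ^ (1/p) / (K δ) ^ (1/q)) ^ p = Nu / (K δ) ^ (p/q) := by
      rw [Real.div_rpow (Real.rpow_nonneg hNu0 _) (Real.rpow_nonneg hKpos.le _),
        ← Real.rpow_mul hNu0, ← Real.rpow_mul hKpos.le,
        one_div_mul_cancel (ne_of_gt hp0), Real.rpow_one]
      congr 2
      field_simp
    rw [h4] at h3
    exact h3
  -- pass to the limit δ → 0⁺
  have hHcont : Continuous fun x => ∫ t in (0:ℝ)..x, |u t| ^ q := by
    apply continuous_iff_continuousAt.2
    intro x
    exact (intervalIntegral.integral_hasDerivAt_right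
      (hhc.intervalIntegrable (μ := volume) 0 x)
      ((hhc.aestronglyMeasurable (μ := volume)).stronglyMeasurableAtFilter)
      hhc.continuousAt).continuousAt
  have hKcont : Continuous K := by
    rw [hK_def]
    exact hHcont.comp (continuous_const.sub (continuous_const.mul continuous_id))
  have hK0 : K 0 = Du := by rw [hK_def]; norm_num; rfl
  have htend : Filter.Tendsto (fun δ => Nu / (K δ) ^ (p/q)) (nhdsWithin 0 (Set.Ioi 0))
      (nhds (Nu / Du ^ (p/q))) := by
    have h1 : ContinuousAt (fun y : ℝ => Nu / y ^ (p/q)) (K 0) := by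
      rw [hK0]
      exact ContinuousAt.div continuousAt_const
        (Real.continuousAt_rpow_const Du (p/q) (Or.inl (ne_of_gt hDu)))
        (ne_of_gt (Real.rpow_pos_of_pos hDu _))
    have h2 := (h1.comp hKcont.continuousAt).tendsto
    simp only [Function.comp] at h2
    rw [hK0] at h2
    exact h2.mono_left nhdsWithin_le_nhds
  apply ge_of_tendsto htend
  filter_upwards [Ioo_mem_nhdsGT_of_mem (Set.left_mem_Ico.2 hδ₀)] with δ hδ
  exact hstep δ hδ

lemma dirII (hp : 1 < p) (hq : 1 ≤ q) : (piPQ p q / 2) ^ p ≤ Apq p q := by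
  rw [Apq]
  apply le_csInf
  · exact ⟨_, ⟨fun t => t, contDiff_id, Or.inl rfl,
      ⟨1/2, ⟨by norm_num, by norm_num⟩, by norm_num⟩, rfl⟩⟩
  · rintro r ⟨u, hu, hend, ⟨t₁, ht₁, hne⟩, rfl⟩
    rcases hend with h0 | h1
    · exact dirII_u hp hq hu h0 ht₁ hne
    · set v : ℝ → ℝ := fun s => u (1 - s) with hv_def
      have hv : ContDiff ℝ 1 v := hu.comp (contDiff_const.sub contDiff_id)
      have hv0 : v 0 = 0 := by rw [hv_def]; simpa using h1
      have hvt : v (1 - t₁) ≠ 0 := by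
        rw [hv_def]
        simpa [show 1-(1-t₁) = t₁ by ring] using hne
      have hmem : 1 - t₁ ∈ Set.Ioo (0:ℝ) 1 := ⟨by linarith [ht₁.2], by linarith [ht₁.1]⟩
      have key := dirII_u hp hq hv hv0 hmem hvt
      have eD : (∫ t in (0:ℝ)..1, |v t| ^ q) = ∫ t in (0:ℝ)..1, |u t| ^ q := by
        rw [hv_def]
        exact reflect_int (f := fun x => |u x| ^ q)
      have eN : (∫ t in (0:ℝ)..1, |deriv v t| ^ p) = ∫ t in (0:ℝ)..1, |deriv u t| ^ p := by
        have e1 : ∀ t ∈ Set.uIcc (0:ℝ) 1, |deriv v t| ^ p =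
            (fun x => |deriv u x| ^ p) (1 - t) := by
          intro t _
          rw [hv_def]
          simp only
          rw [reflect_deriv hu t, abs_neg]
        rw [intervalIntegral.integral_congr e1]
        exact reflect_int (f := fun x => |deriv u x| ^ p)
      rw [eD, eN] at key
      exact key

end Aux

theorem stmt6 (p q : ℝ) (hp : 1 < p) (hq : 1 ≤ q) :
    Apq p q = (piPQ p q / 2) ^ p :=
  le_antisymm (dirI hp hq) (dirII hp hq)
end
end

section
/- For 1 < p < ∞, one has π_{p,1} = 2·((2p−1)/(p−1))^{(p−1)/p}, i.e. the minimum of ‖u'‖_{L^p((0,1))}/‖u‖_{L^1((0,1))} over nonzero u ∈ W^{1,p}((0,1)) with u(0)=u(1)=0 equals 2·((2p−1)/(p−1))^{(p−1)/p}, attained by u(t) = (1/2)^{p/(p−1)} − |t − 1/2|^{p/(p−1)}. -/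
open MeasureTheory Metric Set Filter

noncomputable section

open intervalIntegral Topology
open scoped ENNReal NNReal

lemma memLp_restrict {w : ℝ → ℝ} (hw : Continuous w) (r : ℝ≥0∞) :
    MemLp w r (volume.restrict (Ioc (0:ℝ) 1)) := by
  obtain ⟨C, hC⟩ := isCompact_Icc.exists_bound_of_continuousOn
    (hw.continuousOn : ContinuousOn w (Icc (0:ℝ) 1))
  apply MemLp.of_bound (hw.aestronglyMeasurable.restrict) C
  rw [ae_restrict_iff' measurableSet_Ioc]
  filter_upwards with x hx using hC x (Ioc_subset_Icc_self hx)

/-- The sharp weighted bound: `∫₀¹ |u| ≤ ∫₀¹ |u'(t)| |t-1/2| dt` for `u(0)=u(1)=0`. -/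
lemma weight_bound (u : ℝ → ℝ) (hu : ContDiff ℝ 1 u) (h0 : u 0 = 0) (h1 : u 1 = 0) :
    ∫ t in (0:ℝ)..1, |u t| ≤ ∫ t in (0:ℝ)..1, |deriv u t| * |t - 1/2| := by
  have hud : Differentiable ℝ u := hu.differentiable one_ne_zero
  have hcd : Continuous (deriv u) := hu.continuous_deriv le_rfl
  set f : ℝ → ℝ := fun t => |deriv u t| with hfdef
  have hf : Continuous f := hcd.abs
  set Φ : ℝ → ℝ := fun t => ∫ s in (0:ℝ)..t, f s with hΦdef
  have hΦd : ∀ t, HasDerivAt Φ (f t) t := fun t =>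
    (hf.integral_hasStrictDerivAt 0 t).hasDerivAt
  have hΦc : Continuous Φ := by
    rw [continuous_iff_continuousAt]; exact fun t => (hΦd t).continuousAt
  have hΦ0 : Φ 0 = 0 := integral_same
  have fint : ∀ a b : ℝ, IntervalIntegrable f volume a b := fun a b =>
    hf.intervalIntegrable a b
  have step1 : ∀ t ∈ Icc (0:ℝ) 1, |u t| ≤ Φ t := by
    intro t ht
    have : ∫ s in (0:ℝ)..t, deriv u s = u t - u 0 :=
      integral_deriv_eq_sub (fun x _ => hud x) (hcd.intervalIntegrable _ _)
    rw [h0, sub_zero] at this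
    rw [← this]
    exact (abs_integral_le_integral_abs ht.1)
  have step2 : ∀ t ∈ Icc (0:ℝ) 1, |u t| ≤ Φ 1 - Φ t := by
    intro t ht
    have h' : ∫ s in t..(1:ℝ), deriv u s = u 1 - u t :=
      integral_deriv_eq_sub (fun x _ => hud x) (hcd.intervalIntegrable _ _)
    rw [h1, zero_sub] at h'
    have hadd : Φ t + ∫ s in t..(1:ℝ), f s = Φ 1 :=
      integral_add_adjacent_intervals (fint 0 t) (fint t 1)
    have : |u t| = |∫ s in t..(1:ℝ), deriv u s| := by rw [h', abs_neg]
    have habs : |∫ s in t..(1:ℝ), deriv u s| ≤ ∫ s in t..(1:ℝ), f s :=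
      abs_integral_le_integral_abs ht.2
    rw [this]; linarith
  have parts1 : ∫ t in (0:ℝ)..(1/2), Φ t = ∫ t in (0:ℝ)..(1/2), f t * (1/2 - t) := by
    have := integral_mul_deriv_eq_deriv_mul (a := (0:ℝ)) (b := 1/2)
      (u := Φ) (v := fun t => t - 1/2) (u' := f) (v' := fun _ => (1:ℝ))
      (fun x _ => hΦd x) (fun x _ => (hasDerivAt_id x).sub_const _)
      (fint 0 _) (intervalIntegrable_const)
    simp only [mul_one, hΦ0, zero_mul, sub_self, mul_zero, zero_sub, sub_zero, neg_zero] at this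
    rw [this, ← intervalIntegral.integral_neg]
    apply intervalIntegral.integral_congr
    intro x _; simp; ring
  have parts2 : ∫ t in (1/2:ℝ)..1, (Φ 1 - Φ t) = ∫ t in (1/2:ℝ)..1, f t * (t - 1/2) := by
    have hIBP := integral_mul_deriv_eq_deriv_mul (a := (1/2:ℝ)) (b := 1)
      (u := Φ) (v := fun t => t - 1/2) (u' := f) (v' := fun _ => (1:ℝ))
      (fun x _ => hΦd x) (fun x _ => (hasDerivAt_id x).sub_const _)
      (fint _ _) (intervalIntegrable_const)
    simp only [mul_one, sub_self, mul_zero, sub_zero] at hIBP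
    have hsub : ∫ t in (1/2:ℝ)..1, (Φ 1 - Φ t) =
        (∫ t in (1/2:ℝ)..1, Φ 1) - ∫ t in (1/2:ℝ)..1, Φ t :=
      intervalIntegral.integral_sub intervalIntegrable_const (hΦc.intervalIntegrable _ _)
    rw [hsub, hIBP, intervalIntegral.integral_const]
    simp only [smul_eq_mul]
    ring
  have huc : Continuous u := hu.continuous
  have habsu_int : ∀ a b : ℝ, IntervalIntegrable (fun t => |u t|) volume a b := fun a b =>
    huc.abs.intervalIntegrable a b
  have hw : Continuous fun t : ℝ => f t * |t - 1/2| :=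
    hf.mul ((continuous_id.sub continuous_const).abs)
  have split : ∫ t in (0:ℝ)..1, |u t| =
      (∫ t in (0:ℝ)..(1/2), |u t|) + ∫ t in (1/2:ℝ)..1, |u t| :=
    (integral_add_adjacent_intervals (habsu_int _ _) (habsu_int _ _)).symm
  have splitw : ∫ t in (0:ℝ)..1, f t * |t - 1/2| =
      (∫ t in (0:ℝ)..(1/2), f t * |t - 1/2|) + ∫ t in (1/2:ℝ)..1, f t * |t - 1/2| :=
    (integral_add_adjacent_intervals (hw.intervalIntegrable _ _) (hw.intervalIntegrable _ _)).symm
  have m1 : ∫ t in (0:ℝ)..(1/2), |u t| ≤ ∫ t in (0:ℝ)..(1/2), Φ t :=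
    integral_mono_on (by norm_num) (habsu_int _ _) (hΦc.intervalIntegrable _ _)
      (fun t ht => step1 t ⟨ht.1, le_trans ht.2 (by norm_num)⟩)
  have m2 : ∫ t in (1/2:ℝ)..1, |u t| ≤ ∫ t in (1/2:ℝ)..1, (Φ 1 - Φ t) :=
    integral_mono_on (by norm_num) (habsu_int _ _)
      ((continuous_const.sub hΦc).intervalIntegrable _ _)
      (fun t ht => step2 t ⟨le_trans (by norm_num) ht.1, ht.2⟩)
  have c1 : ∫ t in (0:ℝ)..(1/2), f t * (1/2 - t) = ∫ t in (0:ℝ)..(1/2), f t * |t - 1/2| := by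
    apply intervalIntegral.integral_congr
    intro x hx
    rw [uIcc_of_le (by norm_num)] at hx
    show f x * (1/2 - x) = f x * |x - 1/2|
    rw [abs_of_nonpos (by linarith [hx.2] : x - 1/2 ≤ 0)]
    ring
  have c2 : ∫ t in (1/2:ℝ)..1, f t * (t - 1/2) = ∫ t in (1/2:ℝ)..1, f t * |t - 1/2| := by
    apply intervalIntegral.integral_congr
    intro x hx
    rw [uIcc_of_le (by norm_num)] at hx
    show f x * (x - 1/2) = f x * |x - 1/2|
    rw [abs_of_nonneg (by linarith [hx.1] : (0:ℝ) ≤ x - 1/2)]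
  linarith

lemma holder_bound {p q : ℝ} (hpq : Real.HolderConjugate p q) {g h : ℝ → ℝ}
    (hg : Continuous g) (hh : Continuous h) (hg0 : ∀ x, 0 ≤ g x) (hh0 : ∀ x, 0 ≤ h x) :
    ∫ t in (0:ℝ)..1, g t * h t ≤
      (∫ t in (0:ℝ)..1, g t ^ p) ^ (1/p) * (∫ t in (0:ℝ)..1, h t ^ q) ^ (1/q) := by
  rw [intervalIntegral.integral_of_le (by norm_num : (0:ℝ) ≤ 1),
      intervalIntegral.integral_of_le (by norm_num : (0:ℝ) ≤ 1),
      intervalIntegral.integral_of_le (by norm_num : (0:ℝ) ≤ 1)]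
  exact MeasureTheory.integral_mul_le_Lp_mul_Lq_of_nonneg hpq
    (Eventually.of_forall hg0) (Eventually.of_forall hh0)
    (memLp_restrict hg _) (memLp_restrict hh _)

lemma weight_integral {q : ℝ} (hq : 0 < q) :
    ∫ t in (0:ℝ)..1, |t - 1/2| ^ q = (1/2:ℝ) ^ q / (q + 1) := by
  have hcont : Continuous fun x : ℝ => |x| ^ q := continuous_abs.rpow_const fun x => Or.inr hq.le
  have h1 : ∫ t in (0:ℝ)..1, |t - 1/2| ^ q = ∫ t in (-(1/2):ℝ)..(1/2), |t| ^ q := by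
    have := intervalIntegral.integral_comp_sub_right (a := (0:ℝ)) (b := 1)
      (fun x => |x| ^ q) (1/2)
    rw [this]; norm_num
  have h2 : ∫ t in (-(1/2):ℝ)..(0:ℝ), |t| ^ q = ∫ t in (0:ℝ)..(1/2:ℝ), |t| ^ q := by
    have h := intervalIntegral.integral_comp_neg (a := (-(1/2):ℝ)) (b := 0) (fun x => |x| ^ q)
    simp only [abs_neg, neg_zero, neg_neg] at h
    exact h
  have h3 : ∫ t in (0:ℝ)..(1/2:ℝ), |t| ^ q = (1/2:ℝ) ^ (q + 1) / (q + 1) := by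
    have hcg : ∫ t in (0:ℝ)..(1/2:ℝ), |t| ^ q = ∫ t in (0:ℝ)..(1/2:ℝ), t ^ q :=
      intervalIntegral.integral_congr (fun x hx => by
        rw [uIcc_of_le (by norm_num)] at hx
        rw [abs_of_nonneg hx.1])
    rw [hcg, integral_rpow (Or.inl (by linarith))]
    rw [Real.zero_rpow (by linarith : q + 1 ≠ 0)]
    ring
  rw [h1, ← integral_add_adjacent_intervals (hcont.intervalIntegrable (-(1/2)) 0)
    (hcont.intervalIntegrable 0 (1/2)), h2, h3,
    Real.rpow_add_one (by norm_num : (1/2:ℝ) ≠ 0)]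
  ring

lemma extremal_deriv {q : ℝ} (hq : 1 < q) (s : ℝ) :
    HasDerivAt (fun s : ℝ => (1/2:ℝ) ^ q - |s - 1/2| ^ q)
      (-(q * |s - 1/2| ^ (q - 2) * (s - 1/2))) s := by
  have h1 := hasDerivAt_abs_rpow (s - 1/2) hq
  have h2 : HasDerivAt (fun y : ℝ => y - 1/2) 1 s := (hasDerivAt_id s).sub_const _
  have h3 := h1.comp s h2
  simp only [Function.comp_def, mul_one] at h3
  exact h3.const_sub _

lemma extremal_abs_deriv {q : ℝ} (hq : 1 < q) (x : ℝ) :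
    |(-(q * |x| ^ (q - 2) * x))| = q * |x| ^ (q - 1) := by
  rcases eq_or_ne x 0 with rfl | hx
  · simp [Real.zero_rpow (by linarith : q - 1 ≠ 0)]
  · rw [abs_neg, abs_mul, abs_mul, abs_of_nonneg (by linarith : (0:ℝ) ≤ q),
      abs_of_nonneg (Real.rpow_nonneg (abs_nonneg x) _), mul_assoc,
      ← Real.rpow_add_one (abs_ne_zero.2 hx)]
    ring_nf

lemma extremal_contDiff {q : ℝ} (hq : 1 < q) :
    ContDiff ℝ 1 (fun s : ℝ => (1/2:ℝ) ^ q - |s - 1/2| ^ q) := by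
  have h1 : ContDiff ℝ 1 (fun x : ℝ => ‖x‖ ^ q) := contDiff_norm_rpow hq
  have h2 : ContDiff ℝ 1 (fun s : ℝ => s - 1/2) := contDiff_id.sub contDiff_const
  have h3 := h1.comp h2
  simp only [Function.comp_def, Real.norm_eq_abs] at h3
  exact contDiff_const.sub h3

lemma extremal_N {p q : ℝ} (hp : 1 < p) (hq : 1 < q) (hqp : (q - 1) * p = q) :
    ∫ t in (0:ℝ)..1, |deriv (fun s : ℝ => (1/2:ℝ) ^ q - |s - 1/2| ^ q) t| ^ p
      = q ^ p * ((1/2:ℝ) ^ q / (q + 1)) := by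
  have hderiv : deriv (fun s : ℝ => (1/2:ℝ)^q - |s - 1/2|^q)
      = fun s => -(q * |s - 1/2| ^ (q - 2) * (s - 1/2)) :=
    funext fun s => (extremal_deriv hq s).deriv
  have key : ∀ t : ℝ, |deriv (fun s : ℝ => (1/2:ℝ)^q - |s - 1/2|^q) t| ^ p
      = q ^ p * |t - 1/2| ^ q := by
    intro t
    rw [hderiv]
    show |(-(q * |t - 1/2| ^ (q - 2) * (t - 1/2)))| ^ p = _
    rw [extremal_abs_deriv hq,
      Real.mul_rpow (by linarith : (0:ℝ) ≤ q) (Real.rpow_nonneg (abs_nonneg _) _),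
      ← Real.rpow_mul (abs_nonneg _), hqp]
  simp only [key]
  rw [intervalIntegral.integral_const_mul, weight_integral (by linarith : (0:ℝ) < q)]

lemma extremal_D {q : ℝ} (hq : 1 < q) :
    ∫ t in (0:ℝ)..1, |(1/2:ℝ) ^ q - |t - 1/2| ^ q|
      = (1/2:ℝ) ^ q * q / (q + 1) := by
  have hnonneg : ∀ t ∈ Icc (0:ℝ) 1, 0 ≤ (1/2:ℝ)^q - |t - 1/2|^q := by
    intro t ht
    have h1 : |t - 1/2| ≤ 1/2 := by rw [abs_le]; constructor <;> [linarith [ht.1]; linarith [ht.2]]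
    have := Real.rpow_le_rpow (abs_nonneg _) h1 (by linarith : (0:ℝ) ≤ q)
    linarith
  have hcg : ∫ t in (0:ℝ)..1, |(1/2:ℝ)^q - |t - 1/2|^q|
      = ∫ t in (0:ℝ)..1, ((1/2:ℝ)^q - |t - 1/2|^q) :=
    intervalIntegral.integral_congr (fun x hx => by
      rw [uIcc_of_le (by norm_num)] at hx
      exact abs_of_nonneg (hnonneg x hx))
  have hcont : Continuous fun t : ℝ => |t - 1/2| ^ q :=
    ((continuous_id.sub continuous_const).abs).rpow_const fun x => Or.inr (by linarith)
  rw [hcg, intervalIntegral.integral_sub intervalIntegrable_const (hcont.intervalIntegrable _ _),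
    intervalIntegral.integral_const, weight_integral (by linarith : (0:ℝ) < q)]
  have h0 : (q:ℝ) + 1 ≠ 0 := by linarith
  simp only [smul_eq_mul]
  field_simp
  ring

lemma alg1 {q : ℝ} (hq : 1 < q) :
    2 * (q + 1) ^ (1/q) * (((1/2:ℝ) ^ q / (q + 1)) ^ (1/q)) = 1 := by
  have hq0 : (0:ℝ) < q := by linarith
  have hq1 : (0:ℝ) < q + 1 := by linarith
  rw [Real.div_rpow (Real.rpow_nonneg (by norm_num) _) hq1.le,
    ← Real.rpow_mul (by norm_num : (0:ℝ) ≤ 1/2), mul_one_div_cancel hq0.ne', Real.rpow_one]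
  have hpow : (0:ℝ) < (q + 1) ^ (1/q) := Real.rpow_pos_of_pos hq1 _
  field_simp

lemma alg2 {p q : ℝ} (hp : 1 < p) (hq : 1 < q) (hconj : 1/p + 1/q = 1) :
    (q ^ p * ((1/2:ℝ) ^ q / (q + 1))) ^ (1/p) / ((1/2:ℝ) ^ q * q / (q + 1))
      = 2 * (q + 1) ^ (1/q) := by
  set A := (1/2:ℝ) ^ q / (q + 1) with hA
  have hq0 : (0:ℝ) < q := by linarith
  have hq1 : (0:ℝ) < q + 1 := by linarith
  have hhalf : (0:ℝ) < (1/2:ℝ) ^ q := Real.rpow_pos_of_pos (by norm_num) _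
  have hApos : 0 < A := div_pos hhalf hq1
  have hnum : (q ^ p * A) ^ (1/p) = q * A ^ (1/p) := by
    rw [Real.mul_rpow (Real.rpow_nonneg hq0.le _) hApos.le,
      ← Real.rpow_mul hq0.le, mul_one_div_cancel (by linarith : p ≠ 0), Real.rpow_one]
  have hD : (1/2:ℝ) ^ q * q / (q + 1) = q * A := by
    rw [hA, mul_comm ((1/2:ℝ) ^ q) q, mul_div_assoc]
  rw [hnum, hD, mul_div_mul_left _ _ hq0.ne']
  have h1 : A ^ (1/p) / A = A ^ (1/p - 1) := by
    rw [Real.rpow_sub hApos, Real.rpow_one]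
  have h2 : 1/p - 1 = -(1/q) := by linarith
  rw [h1, h2, Real.rpow_neg hApos.le]
  exact inv_eq_of_mul_eq_one_left (alg1 hq)


theorem stmt8 (p : ℝ) (hp : 1 < p) :
    piPQ p 1 = 2 * ((2 * p - 1) / (p - 1)) ^ ((p - 1) / p) ∧
    (∫ t in (0:ℝ)..1,
        |deriv (fun s : ℝ => (1 / 2 : ℝ) ^ (p / (p - 1)) - |s - 1 / 2| ^ (p / (p - 1))) t| ^ p)
          ^ (1 / p) /
      (∫ t in (0:ℝ)..1,
        |(1 / 2 : ℝ) ^ (p / (p - 1)) - |t - 1 / 2| ^ (p / (p - 1))| ^ (1:ℝ)) ^ ((1:ℝ) / 1)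
      = piPQ p 1 := by
  have hp0 : (0:ℝ) < p := by linarith
  have hp1 : (0:ℝ) < p - 1 := by linarith
  set q : ℝ := p / (p - 1) with hqdef
  have hq : 1 < q := (one_lt_div hp1).mpr (by linarith)
  have hq0 : (0:ℝ) < q := by linarith
  have hq1 : (0:ℝ) < q + 1 := by linarith
  have hconj : 1/p + 1/q = 1 := by rw [hqdef]; field_simp; ring
  have hconjE : Real.HolderConjugate p q := by
    exact { inv_add_inv_eq_inv := by rw [inv_one, ← one_div, ← one_div]; exact hconj,
            left_pos := hp0, right_pos := hq0 }
  have hqp : (q - 1) * p = q := by rw [hqdef]; field_simp; ring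
  have hπeq : 2 * ((2 * p - 1) / (p - 1)) ^ ((p - 1) / p) = 2 * (q + 1) ^ (1/q) := by
    have e1 : (2 * p - 1) / (p - 1) = q + 1 := by rw [hqdef]; field_simp; ring
    have e2 : (p - 1) / p = 1/q := by
      rw [hqdef, one_div, inv_div]
    rw [e1, e2]
  set u₀ : ℝ → ℝ := fun s : ℝ => (1/2:ℝ) ^ q - |s - 1/2| ^ q with hu₀def
  have hcd0 : ContDiff ℝ 1 u₀ := extremal_contDiff hq
  have habs0 : |(0:ℝ) - 1/2| = 1/2 := by rw [abs_of_nonpos (by norm_num)]; norm_num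
  have habs1 : |(1:ℝ) - 1/2| = 1/2 := by rw [abs_of_nonneg (by norm_num)]; norm_num
  have hu00 : u₀ 0 = 0 := by rw [hu₀def]; simp only [habs0]; ring
  have hu01 : u₀ 1 = 0 := by rw [hu₀def]; simp only [habs1]; ring
  have hu0half : u₀ (1/2) ≠ 0 := by
    rw [hu₀def]
    simp only [sub_self, abs_zero, Real.zero_rpow hq0.ne', sub_zero]
    exact (Real.rpow_pos_of_pos (by norm_num) _).ne'
  have hNval : ∫ t in (0:ℝ)..1, |deriv u₀ t| ^ p = q ^ p * ((1/2:ℝ) ^ q / (q + 1)) :=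
    extremal_N hp hq hqp
  have hDval : ∫ t in (0:ℝ)..1, |u₀ t| ^ (1:ℝ) = (1/2:ℝ) ^ q * q / (q + 1) := by
    simp only [Real.rpow_one]
    exact extremal_D hq
  have hRV : (∫ t in (0:ℝ)..1, |deriv u₀ t| ^ p) ^ (1/p) /
      (∫ t in (0:ℝ)..1, |u₀ t| ^ (1:ℝ)) ^ ((1:ℝ)/1) = 2 * (q + 1) ^ (1/q) := by
    rw [hNval, hDval, show ((1:ℝ)/1) = 1 by norm_num, Real.rpow_one]
    exact alg2 hp hq hconj
  have hmem : (2 * (q + 1) ^ (1/q)) ∈ {r : ℝ | ∃ u : ℝ → ℝ, ContDiff ℝ 1 u ∧ u 0 = 0 ∧ u 1 = 0 ∧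
      (∃ t ∈ Set.Ioo (0:ℝ) 1, u t ≠ 0) ∧
      r = (∫ t in (0:ℝ)..1, |deriv u t| ^ p) ^ (1 / p) /
        (∫ t in (0:ℝ)..1, |u t| ^ (1:ℝ)) ^ (1 / (1:ℝ))} := by
    refine ⟨u₀, hcd0, hu00, hu01, ⟨1/2, by norm_num, hu0half⟩, ?_⟩
    rw [show (1/(1:ℝ)) = (1:ℝ)/1 by norm_num, hRV]
  have hlb : ∀ r ∈ {r : ℝ | ∃ u : ℝ → ℝ, ContDiff ℝ 1 u ∧ u 0 = 0 ∧ u 1 = 0 ∧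
      (∃ t ∈ Set.Ioo (0:ℝ) 1, u t ≠ 0) ∧
      r = (∫ t in (0:ℝ)..1, |deriv u t| ^ p) ^ (1 / p) /
        (∫ t in (0:ℝ)..1, |u t| ^ (1:ℝ)) ^ (1 / (1:ℝ))},
      2 * (q + 1) ^ (1/q) ≤ r := by
    rintro r ⟨u, hu, h0, h1, ⟨t₀, ht₀, hut⟩, rfl⟩
    have hcd : Continuous (deriv u) := hu.continuous_deriv le_rfl
    have hD1 : ∫ t in (0:ℝ)..1, |u t| ^ (1:ℝ) = ∫ t in (0:ℝ)..1, |u t| := by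
      simp only [Real.rpow_one]
    have hDpos : 0 < ∫ t in (0:ℝ)..1, |u t| := by
      apply intervalIntegral.integral_pos (by norm_num)
      · exact hu.continuous.abs.continuousOn
      · exact fun x _ => abs_nonneg _
      · exact ⟨t₀, ⟨ht₀.1.le, ht₀.2.le⟩, abs_pos.mpr hut⟩
    have hbound : ∫ t in (0:ℝ)..1, |u t| ≤
        (∫ t in (0:ℝ)..1, |deriv u t| ^ p) ^ (1/p) * ((1/2:ℝ) ^ q / (q + 1)) ^ (1/q) := by
      refine (weight_bound u hu h0 h1).trans ?_
      have hh := holder_bound (g := fun t => |deriv u t|) (h := fun t : ℝ => |t - 1/2|) hconjE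
        (hcd.abs) ((continuous_id.sub continuous_const).abs)
        (fun x => abs_nonneg _) (fun x => abs_nonneg _)
      rw [weight_integral hq0] at hh
      exact hh
    rw [hD1, show (1/(1:ℝ)) = (1:ℝ) by norm_num, Real.rpow_one, le_div_iff₀ hDpos]
    have hπnn : (0:ℝ) ≤ 2 * (q + 1) ^ (1/q) := by positivity
    calc 2 * (q + 1) ^ (1/q) * ∫ t in (0:ℝ)..1, |u t|
        ≤ 2 * (q + 1) ^ (1/q) *
          ((∫ t in (0:ℝ)..1, |deriv u t| ^ p) ^ (1/p) * ((1/2:ℝ) ^ q / (q + 1)) ^ (1/q)) :=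
          mul_le_mul_of_nonneg_left hbound hπnn
      _ = (∫ t in (0:ℝ)..1, |deriv u t| ^ p) ^ (1/p) *
          (2 * (q + 1) ^ (1/q) * ((1/2:ℝ) ^ q / (q + 1)) ^ (1/q)) := by ring
      _ = (∫ t in (0:ℝ)..1, |deriv u t| ^ p) ^ (1/p) := by rw [alg1 hq, mul_one]
  have hpi : piPQ p 1 = 2 * (q + 1) ^ (1/q) := by
    rw [piPQ]
    exact IsLeast.csInf_eq ⟨hmem, hlb⟩
  constructor
  · rw [hpi, hπeq]
  · rw [hpi]
    exact hRV
end
end
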